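/- arXiv:1803.01741 — 4 statements merged into one kernel-verified Lean document; each statement's English description precedes it below -/
import Mathlib

section
/- Define σ : ℤ → ℝ[X]² by σ₀ = (1, 1) and the two-sided recursion σ_{j+1} = ( X·σ_j¹ + (X−1)·σ_j², (X+1)·σ_j¹ + X·σ_j² ) for all j ∈ ℤ, where σ_j = (σ_j¹, σ_j²) (the recursion matrix [[X, X−1],[X+1, X]] has determinant 1, so it extends to negative indices; in particular σ_{−1} = (1, −1)). Then the family { σ_j : j ∈ ℤ } is a basis of ℝ[X]² as a real vector space: it is linearly independent over ℝ and its ℝ-linear span is all of ℝ[X]². -/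
/-!
Write `σ n = (A n, B n)` for `n ≥ 0`. Conjugating the step matrix `[[X, X - 1], [X + 1, X]]` by
`diag(1, -1)` inverts it, and the step sends `(1, -1)` to `(1, 1)`; hence the negative half of the
orbit mirrors the positive one: `σ (-n-1) = (A n, -B n)`. Comparing top coefficients, `A n` and
`B n` have degree `n` and leading coefficient `2 ^ n`, so `(A n)` and `(B n)` are bases of `ℝ[X]`. Identifying the
two factors through `A n ↦ B n`, the vectors `(A n, ±B n)` are the image of the product basis
`(A n, 0), (0, B n)` under the invertible map `(x, y) ↦ (x + y, x - y)`.
-/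

open Polynomial Module

section AddSub

variable {K M N ι : Type*} [Field K] [NeZero (2 : K)] [AddCommGroup M] [Module K M]
  [AddCommGroup N] [Module K N]

variable (K M) in
def LinearEquiv.prodAddSub : (M × M) ≃ₗ[K] (M × M) :=
  LinearEquiv.ofLinearMap
    ((LinearMap.fst K M M + LinearMap.snd K M M).prod (LinearMap.fst K M M - LinearMap.snd K M M))
    ((2 : K)⁻¹ • (LinearMap.fst K M M + LinearMap.snd K M M).prod
      (LinearMap.fst K M M - LinearMap.snd K M M))
    (by ext <;> simp [← two_smul K, smul_smul, two_ne_zero])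
    (by ext <;> simp [← two_smul K, smul_smul, two_ne_zero])

@[simp]
lemma LinearEquiv.prodAddSub_apply (v : M × M) :
    LinearEquiv.prodAddSub K M v = (v.1 + v.2, v.1 - v.2) := rfl

noncomputable def Module.Basis.prodAddSub (a : Basis ι K M) (b : Basis ι K N) :
    Basis (ι ⊕ ι) K (M × N) :=
  ((a.prod a).map (LinearEquiv.prodAddSub K M)).map
    ((LinearEquiv.refl K M).prodCongr (a.equiv b (Equiv.refl ι)))

@[simp]
lemma Module.Basis.prodAddSub_inl (a : Basis ι K M) (b : Basis ι K N) (i : ι) :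
    a.prodAddSub b (Sum.inl i) = (a i, b i) := by
  simp [Module.Basis.prodAddSub]

@[simp]
lemma Module.Basis.prodAddSub_inr (a : Basis ι K M) (b : Basis ι K N) (i : ι) :
    a.prodAddSub b (Sum.inr i) = (a i, -b i) := by
  simp [Module.Basis.prodAddSub]

end AddSub

lemma Polynomial.Sequence.isUnit_leadingCoeff {K : Type*} [DivisionRing K]
    (S : Polynomial.Sequence K) (n : ℕ) : IsUnit (S n).leadingCoeff :=
  (leadingCoeff_ne_zero.mpr (S.ne_zero n)).isUnit

section Step

variable {R : Type*} [CommRing R]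

noncomputable def sigmaStep (v : R[X] × R[X]) : R[X] × R[X] :=
  (X * v.1 + (X - 1) * v.2, (X + 1) * v.1 + X * v.2)

lemma sigmaStep_neg_snd_sigmaStep (v : R[X] × R[X]) :
    sigmaStep ((sigmaStep v).1, -(sigmaStep v).2) = (v.1, -v.2) := by
  ext1 <;> simp only [sigmaStep] <;> ring

lemma sigmaStep_one_neg_one : sigmaStep ((1 : R[X]), -1) = (1, 1) := by
  ext1 <;> simp only [sigmaStep] <;> ring

lemma natDegree_sigmaStep_le {v : R[X] × R[X]} {n : ℕ} (h₁ : v.1.natDegree ≤ n)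
    (h₂ : v.2.natDegree ≤ n) :
    (sigmaStep v).1.natDegree ≤ n + 1 ∧ (sigmaStep v).2.natDegree ≤ n + 1 := by
  constructor <;> simp only [sigmaStep] <;> compute_degree <;> omega

lemma coeff_sigmaStep (v : R[X] × R[X]) (n : ℕ) :
    (sigmaStep v).1.coeff (n + 1) = v.1.coeff n + v.2.coeff n - v.2.coeff (n + 1) ∧
    (sigmaStep v).2.coeff (n + 1) = v.1.coeff n + v.1.coeff (n + 1) + v.2.coeff n := by
  constructor
  · simp [sigmaStep, coeff_X_mul, sub_mul, add_sub_assoc]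
  · simp [sigmaStep, coeff_X_mul, add_mul]

lemma natDegree_sigmaStep_iterate_le (n : ℕ) :
    (sigmaStep^[n] ((1 : R[X]), 1)).1.natDegree ≤ n ∧
      (sigmaStep^[n] ((1 : R[X]), 1)).2.natDegree ≤ n := by
  induction n with
  | zero => simp
  | succ n ih =>
    rw [Function.iterate_succ_apply']
    exact natDegree_sigmaStep_le ih.1 ih.2

lemma coeff_sigmaStep_iterate (n : ℕ) :
    (sigmaStep^[n] ((1 : R[X]), 1)).1.coeff n = 2 ^ n ∧
      (sigmaStep^[n] ((1 : R[X]), 1)).2.coeff n = 2 ^ n := by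
  induction n with
  | zero => simp
  | succ n ih =>
    obtain ⟨hdeg₁, hdeg₂⟩ := natDegree_sigmaStep_iterate_le (R := R) n
    rw [Function.iterate_succ_apply', (coeff_sigmaStep _ n).1, (coeff_sigmaStep _ n).2, ih.1, ih.2,
      coeff_eq_zero_of_natDegree_lt (Nat.lt_succ_of_le hdeg₁),
      coeff_eq_zero_of_natDegree_lt (Nat.lt_succ_of_le hdeg₂)]
    constructor <;> ring

lemma eq_sigmaStep_iterate_of_rec {σ : ℤ → R[X] × R[X]} (h0 : σ 0 = (1, 1))
    (hrec : ∀ j, σ (j + 1) = sigmaStep (σ j)) (n : ℕ) : σ n = sigmaStep^[n] (1, 1) := by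
  induction n with
  | zero => exact h0
  | succ n ih => rw [Function.iterate_succ_apply', ← ih, Nat.cast_succ, hrec]

lemma neg_snd_eq_sigmaStep_iterate_of_rec {σ : ℤ → R[X] × R[X]} (h0 : σ 0 = (1, 1))
    (hrec : ∀ j, σ (j + 1) = sigmaStep (σ j)) (n : ℕ) :
    ((σ (Int.negSucc n)).1, -(σ (Int.negSucc n)).2) = sigmaStep^[n] (1, 1) := by
  have hback (j : ℤ) : ((σ j).1, -(σ j).2) = sigmaStep ((σ (j + 1)).1, -(σ (j + 1)).2) := by
    rw [hrec, sigmaStep_neg_snd_sigmaStep]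
  induction n with
  | zero =>
    rw [hback, show Int.negSucc 0 + 1 = 0 by rfl, h0]
    exact sigmaStep_one_neg_one
  | succ n ih =>
    rw [Function.iterate_succ_apply', ← ih, hback,
      show Int.negSucc (n + 1) + 1 = .negSucc n by omega]

end Step

section Basis

variable {K : Type*} [Field K] [NeZero (2 : K)]

lemma degree_sigmaStep_iterate (n : ℕ) :
    (sigmaStep^[n] ((1 : K[X]), 1)).1.degree = n ∧
      (sigmaStep^[n] ((1 : K[X]), 1)).2.degree = n := by
  obtain ⟨hdeg₁, hdeg₂⟩ := natDegree_sigmaStep_iterate_le (R := K) n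
  obtain ⟨hc₁, hc₂⟩ := coeff_sigmaStep_iterate (R := K) n
  have h2n : (2 : K) ^ n ≠ 0 := pow_ne_zero n two_ne_zero
  exact ⟨degree_eq_of_le_of_coeff_ne_zero (degree_le_of_natDegree_le hdeg₁) (hc₁ ▸ h2n),
    degree_eq_of_le_of_coeff_ne_zero (degree_le_of_natDegree_le hdeg₂) (hc₂ ▸ h2n)⟩

variable (K) in
noncomputable def sigmaFstSeq : Polynomial.Sequence K :=
  ⟨fun n ↦ (sigmaStep^[n] ((1 : K[X]), 1)).1, fun n ↦ (degree_sigmaStep_iterate n).1⟩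

variable (K) in
noncomputable def sigmaSndSeq : Polynomial.Sequence K :=
  ⟨fun n ↦ (sigmaStep^[n] ((1 : K[X]), 1)).2, fun n ↦ (degree_sigmaStep_iterate n).2⟩

variable (K) in
noncomputable def sigmaBasis : Basis ℤ K (K[X] × K[X]) :=
  (((sigmaFstSeq K).basis (Sequence.isUnit_leadingCoeff _)).prodAddSub
    ((sigmaSndSeq K).basis (Sequence.isUnit_leadingCoeff _))).reindex Equiv.intEquivNatSumNat.symm

lemma sigmaBasis_natCast (n : ℕ) : sigmaBasis K n = sigmaStep^[n] ((1 : K[X]), 1) := by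
  have hidx : Equiv.intEquivNatSumNat (n : ℤ) = Sum.inl n := rfl
  simp only [sigmaBasis, Basis.reindex_apply, Equiv.symm_symm, hidx, Basis.prodAddSub_inl,
    Sequence.basis_eq_self]
  rfl

lemma sigmaBasis_negSucc (n : ℕ) :
    sigmaBasis K (Int.negSucc n) =
      ((sigmaStep^[n] ((1 : K[X]), 1)).1, -(sigmaStep^[n] ((1 : K[X]), 1)).2) := by
  have hidx : Equiv.intEquivNatSumNat (Int.negSucc n) = Sum.inr n := rfl
  simp only [sigmaBasis, Basis.reindex_apply, Equiv.symm_symm, hidx, Basis.prodAddSub_inr,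
    Sequence.basis_eq_self]
  rfl

lemma eq_sigmaBasis_of_rec {σ : ℤ → K[X] × K[X]} (h0 : σ 0 = (1, 1))
    (hrec : ∀ j, σ (j + 1) = sigmaStep (σ j)) : σ = sigmaBasis K := by
  funext j
  cases j with
  | ofNat n => exact (eq_sigmaStep_iterate_of_rec h0 hrec n).trans (sigmaBasis_natCast n).symm
  | negSucc n =>
    rw [sigmaBasis_negSucc, ← neg_snd_eq_sigmaStep_iterate_of_rec h0 hrec n, neg_neg]

end Basis

theorem stmt5 (σ : ℤ → Polynomial ℝ × Polynomial ℝ)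
    (h0 : σ 0 = (1, 1))
    (hrec : ∀ j : ℤ, σ (j + 1) =
      (X * (σ j).1 + (X - 1) * (σ j).2, (X + 1) * (σ j).1 + X * (σ j).2)) :
    LinearIndependent ℝ σ ∧
      Submodule.span ℝ (Set.range σ) = (⊤ : Submodule ℝ (Polynomial ℝ × Polynomial ℝ)) := by
  obtain rfl := eq_sigmaBasis_of_rec h0 hrec
  exact ⟨(sigmaBasis ℝ).linearIndependent, (sigmaBasis ℝ).span_eq⟩
end

section
/- Define σ : ℤ → ℝ[X]² by σ₀ = (1, 1) and σ_{j+1} = ( X·σ_j¹ + (X−1)·σ_j², (X+1)·σ_j¹ + X·σ_j² ) for all j ∈ ℤ. Then for every integer k ≥ 1, both coordinates of σ_k − ( (2X)^k, (2X)^k ) are polynomials of degree strictly less than k, and both coordinates of σ_{−k−1} − ( (2X)^k, −(2X)^k ) are polynomials of degree strictly less than k. -/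
/-!
In the basis `u = (1, 1)`, `v = (1, -1)` the recursion step sends `u ↦ 2X • u - v` and `v ↦ u`,
so `σ j = U j • u - U (j - 1) • v` with `U` the Chebyshev polynomials of the second kind on `ℤ`.
The step has determinant one, hence is injective, so `σ 0` determines `σ` in both directions.
The bounds then come from `U k = (2X)^k + (lower terms)`, `deg U (k - 1) < k`, and the
reflections `U (-k - 1) = -U (k - 1)`, `U (-k - 2) = -U k`.
-/

open Polynomial

theorem Int.eq_of_forall_succ_eq_map {α : Type*} {f : α → α} (hf : Function.Injective f)
    {σ τ : ℤ → α} (hσ : ∀ j, σ (j + 1) = f (σ j)) (hτ : ∀ j, τ (j + 1) = f (τ j))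
    (h0 : σ 0 = τ 0) : σ = τ := by
  funext j
  induction j using Int.induction_on with
  | zero => exact h0
  | succ j ih => rw [hσ, hτ, ih]
  | pred j ih => exact hf (by rw [← hσ, ← hτ, sub_add_cancel, ih])

noncomputable section

namespace Polynomial

variable (R : Type*) [CommRing R]

def pairStep (p : R[X] × R[X]) : R[X] × R[X] :=
  (X * p.1 + (X - 1) * p.2, (X + 1) * p.1 + X * p.2)

theorem pairStep_injective : Function.Injective (pairStep R) := by
  refine Function.LeftInverse.injective (g := fun p ↦ (X * p.1 - (X - 1) * p.2,
    -(X + 1) * p.1 + X * p.2)) fun p ↦ ?_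
  ext : 1 <;> dsimp only [pairStep] <;> ring

def chebyshevPair (j : ℤ) : R[X] × R[X] :=
  (Chebyshev.U R j - Chebyshev.U R (j - 1), Chebyshev.U R j + Chebyshev.U R (j - 1))

theorem chebyshevPair_zero : chebyshevPair R 0 = (1, 1) := by
  simp [chebyshevPair]

theorem chebyshevPair_succ (j : ℤ) :
    chebyshevPair R (j + 1) = pairStep R (chebyshevPair R j) := by
  ext : 1 <;> simp only [chebyshevPair, pairStep, add_sub_cancel_right] <;>
    linear_combination Chebyshev.U_sub_one R j

theorem eq_chebyshevPair {σ : ℤ → R[X] × R[X]} (h0 : σ 0 = (1, 1))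
    (hrec : ∀ j, σ (j + 1) = pairStep R (σ j)) : σ = chebyshevPair R :=
  Int.eq_of_forall_succ_eq_map (pairStep_injective R) hrec (chebyshevPair_succ R)
    (h0.trans (chebyshevPair_zero R).symm)

variable [IsDomain R] [NeZero (2 : R)]

theorem Chebyshev.U_natCast_sub_one_mem_degreeLT (n : ℕ) :
    U R ((n : ℤ) - 1) ∈ degreeLT R n := by
  rw [mem_degreeLT]
  cases n with
  | zero => simp
  | succ m =>
    rw [Nat.cast_succ, add_sub_cancel_right, degree_U_natCast]
    exact_mod_cast m.lt_succ_self

theorem Chebyshev.U_natCast_sub_two_mul_X_pow_mem_degreeLT (n : ℕ) :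
    U R n - (2 * X) ^ n ∈ degreeLT R n := by
  have hpow : (2 * X : R[X]) ^ n = Polynomial.C (2 ^ n) * X ^ n := by rw [mul_pow, C_pow, C_ofNat]
  have h2n : (2 : R) ^ n ≠ 0 := pow_ne_zero n two_ne_zero
  rw [mem_degreeLT, ← degree_U_natCast R n, hpow]
  refine degree_sub_lt_left ?_ (ne_zero_of_degree_gt (n := ⊥) ?_) ?_
  · rw [degree_C_mul_X_pow n h2n, degree_U_natCast]
  · simp
  · rw [leadingCoeff_C_mul_X_pow, leadingCoeff_U_natCast]

end Polynomial

end

theorem stmt6 (σ : ℤ → Polynomial ℝ × Polynomial ℝ)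
    (h0 : σ 0 = (1, 1))
    (hrec : ∀ j : ℤ, σ (j + 1) =
      (X * (σ j).1 + (X - 1) * (σ j).2, (X + 1) * (σ j).1 + X * (σ j).2)) :
    ∀ k : ℕ, 1 ≤ k →
      ((σ (k : ℤ)).1 - (2 * X) ^ k).degree < (k : WithBot ℕ) ∧
      ((σ (k : ℤ)).2 - (2 * X) ^ k).degree < (k : WithBot ℕ) ∧
      ((σ (-(k : ℤ) - 1)).1 - (2 * X) ^ k).degree < (k : WithBot ℕ) ∧
      ((σ (-(k : ℤ) - 1)).2 + (2 * X) ^ k).degree < (k : WithBot ℕ) := by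
  intro k _
  obtain rfl : σ = chebyshevPair ℝ := eq_chebyshevPair ℝ h0 hrec
  have hE := Chebyshev.U_natCast_sub_two_mul_X_pow_mem_degreeLT ℝ k
  have hV := Chebyshev.U_natCast_sub_one_mem_degreeLT ℝ k
  simp only [← mem_degreeLT, chebyshevPair, sub_sub, one_add_one_eq_two, Chebyshev.U_neg_sub_one,
    Chebyshev.U_neg_sub_two]
  refine ⟨?_, ?_, ?_, ?_⟩
  · convert sub_mem hE hV using 1; ring
  · convert add_mem hE hV using 1; ring
  · convert sub_mem hE hV using 1; ring
  · convert neg_mem (add_mem hE hV) using 1; ring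
end

section
/- Define v : ℤ → ℝ[X]² by v₀ = (0, 0) and the two-sided affine recursion v_{n+1} = ( X·v_n¹ + (X−1)·v_n² + 1, (X+1)·v_n¹ + X·v_n² + 1 ) (the linear part has determinant 1, so the recursion extends to negative indices). Then for every t ∈ (0, π) and every n ∈ ℤ, evaluating the coordinate polynomials at X = cos t gives v_n(cos t) = ( sin(n t) / sin t, (cos(n t) − 1)/(cos t − 1) ). -/
/-!
Both sides satisfy the same affine recursion `p ↦ chebyshevStep c p` at `c = cos t`: the left side
by evaluating the polynomial recursion, the right side by the addition formulas for `sin` and `cos`.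
The linear part of the step has determinant `c² - (c² - 1) = 1`, so the step is injective and a
two-sided orbit is determined by its value at `0`.
-/

open Polynomial Real

theorem Int.eq_of_map_succ_eq {α : Type*} {f : α → α} (hf : Function.Injective f) {x y : ℤ → α}
    (hx : ∀ n, x (n + 1) = f (x n)) (hy : ∀ n, y (n + 1) = f (y n)) (h0 : x 0 = y 0) :
    x = y := by
  funext n
  induction n using Int.induction_on with
  | zero => exact h0
  | succ n ih => rw [hx, hy, ih]
  | pred n ih =>
    apply hf
    rw [← hx, ← hy, sub_add_cancel, ih]

section chebyshevStep

variable {R S : Type*} [CommRing R] [CommRing S]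

def chebyshevStep (c : R) (p : R × R) : R × R :=
  (c * p.1 + (c - 1) * p.2 + 1, (c + 1) * p.1 + c * p.2 + 1)

theorem chebyshevStep_injective (c : R) : Function.Injective (chebyshevStep c) := by
  rintro ⟨a, b⟩ ⟨a', b'⟩ h
  simp only [chebyshevStep, Prod.mk.injEq] at h
  obtain ⟨h₁, h₂⟩ := h
  refine Prod.ext ?_ ?_
  · linear_combination c * h₁ - (c - 1) * h₂
  · linear_combination -(c + 1) * h₁ + c * h₂

theorem map_chebyshevStep (f : R →+* S) (c : R) (p : R × R) :
    Prod.map f f (chebyshevStep c p) = chebyshevStep (f c) (Prod.map f f p) := by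
  simp [chebyshevStep]

end chebyshevStep

theorem chebyshevStep_sin_cos {t : ℝ} (hs : sin t ≠ 0) (x : ℝ) :
    chebyshevStep (cos t) (sin (x * t) / sin t, (cos (x * t) - 1) / (cos t - 1)) =
      (sin ((x + 1) * t) / sin t, (cos ((x + 1) * t) - 1) / (cos t - 1)) := by
  have hc : cos t - 1 ≠ 0 :=
    sub_ne_zero.mpr fun h ↦ hs (by simpa [h] using sin_sq_add_cos_sq t)
  rw [chebyshevStep, add_one_mul x t, sin_add, cos_add, Prod.mk.injEq]
  constructor
  · field_simp
    ring
  · field_simp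
    linear_combination sin (x * t) * sin_sq_add_cos_sq t

theorem stmt8 (v : ℤ → Polynomial ℝ × Polynomial ℝ)
    (h0 : v 0 = (0, 0))
    (hrec : ∀ n : ℤ, v (n + 1) =
      (X * (v n).1 + (X - 1) * (v n).2 + 1, (X + 1) * (v n).1 + X * (v n).2 + 1)) :
    ∀ t ∈ Set.Ioo (0 : ℝ) π, ∀ n : ℤ,
      (v n).1.eval (Real.cos t) = Real.sin ((n : ℝ) * t) / Real.sin t ∧
      (v n).2.eval (Real.cos t) = (Real.cos ((n : ℝ) * t) - 1) / (Real.cos t - 1) := by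
  rintro t ⟨ht0, htπ⟩ n
  have hs : sin t ≠ 0 := (sin_pos_of_pos_of_lt_pi ht0 htπ).ne'
  let ev := evalRingHom (cos t)
  have horbit : (fun n ↦ Prod.map ev ev (v n)) =
      fun n : ℤ ↦ (sin (n * t) / sin t, (cos (n * t) - 1) / (cos t - 1)) := by
    refine Int.eq_of_map_succ_eq (chebyshevStep_injective (cos t)) (fun n ↦ ?_) (fun n ↦ ?_) ?_
    · rw [hrec, ← chebyshevStep, map_chebyshevStep, coe_evalRingHom, eval_X]
    · rw [chebyshevStep_sin_cos hs, Int.cast_add, Int.cast_one]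
    · simp [h0]
  exact Prod.ext_iff.mp (congrFun horbit n)
end

section
/- Define v : ℤ → ℝ[X]² by v₀ = (0, 0) and v_{n+1} = ( X·v_n¹ + (X−1)·v_n² + 1, (X+1)·v_n¹ + X·v_n² + 1 ) for all n ∈ ℤ. For j, k ∈ ℤ set γ_j = v_{j+1} + v_j − v₁ − v₀ and σ_k = v_{k+1} − v_k (elements of ℝ[X]²). Then for all j, k ∈ ℤ: (1/(2π)) · ∫_{t=0}^{π} ( γ_j(cos t) ∧ σ_k(cos t) ) · (1 − cos t) dt = δ_{j,k} − δ_{0,k}, where γ_j(cos t) and σ_k(cos t) denote the vectors in ℝ² obtained by evaluating the coordinate polynomials at X = cos t, and δ_{a,b} equals 1 if a = b and 0 otherwise. -/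
open Polynomial Real

/-- The wedge product of two vectors in `ℝ²`: `u ∧ w = u₁w₂ − u₂w₁`. -/
def wedge (u w : ℝ × ℝ) : ℝ := u.1 * w.2 - u.2 * w.1

/-- Evaluation of a pair of polynomials at a real number, giving a vector in `ℝ²`. -/
def evalPair (p : Polynomial ℝ × Polynomial ℝ) (c : ℝ) : ℝ × ℝ :=
  (p.1.eval c, p.2.eval c)

/-!
At `X = cos t` the affine recursion acts on `(sin t · v¹, (1 - cos t) · v²)` as the rotation by `t`
followed by the translation by `(sin t, 1 - cos t)`, exactly as `n ↦ n + 1` acts on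
`(sin (n t), 1 - cos (n t))`. Hence `v_n(cos t) = (sin (n t) / sin t, (1 - cos (n t)) / (1 - cos t))`
whenever `sin t ≠ 0`, and a trigonometric computation turns the integrand into
`2 (cos ((k - j) t) - cos (k t))` on `(0, π)`. Orthogonality of `cos (m t)` on `[0, π]` finishes.
-/

lemma evalPair_add (p q : ℝ[X] × ℝ[X]) (c : ℝ) :
    evalPair (p + q) c = evalPair p c + evalPair q c := by
  simp [evalPair]

lemma evalPair_sub (p q : ℝ[X] × ℝ[X]) (c : ℝ) :
    evalPair (p - q) c = evalPair p c - evalPair q c := by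
  simp [evalPair]

lemma one_sub_cos_ne_zero {t : ℝ} (ht : sin t ≠ 0) : 1 - cos t ≠ 0 := by
  rw [sub_ne_zero, ne_comm]
  exact fun h => ht (sin_eq_zero_iff_cos_eq.2 (Or.inl h))

lemma sin_cos_recursion_step_iff {t a b a' b' x : ℝ}
    (ha' : a' = cos t * a + (cos t - 1) * b + 1) (hb' : b' = (cos t + 1) * a + cos t * b + 1) :
    (sin t * a = sin x ∧ (1 - cos t) * b = 1 - cos x) ↔
      (sin t * a' = sin (x + t) ∧ (1 - cos t) * b' = 1 - cos (x + t)) := by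
  have hpyth := sin_sq_add_cos_sq t
  rw [sin_add, cos_add]
  subst ha' hb'
  constructor
  · rintro ⟨hP, hQ⟩
    constructor
    · linear_combination cos t * hP - sin t * hQ
    · linear_combination sin t * hP + cos t * hQ - a * hpyth
  · rintro ⟨H1, H2⟩
    constructor
    · linear_combination cos t * H1 + sin t * H2 + sin x * hpyth
    · linear_combination -sin t * H1 + cos t * H2 +
        (cos t * a + (cos t - 1) * b + 1 - cos x) * hpyth

lemma sin_mul_eval_fst_and_one_sub_cos_mul_eval_snd (v : ℤ → ℝ[X] × ℝ[X]) (h0 : v 0 = (0, 0))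
    (hrec : ∀ n : ℤ, v (n + 1) =
      (X * (v n).1 + (X - 1) * (v n).2 + 1, (X + 1) * (v n).1 + X * (v n).2 + 1))
    (t : ℝ) (n : ℤ) :
    sin t * (v n).1.eval (cos t) = sin (n * t) ∧
      (1 - cos t) * (v n).2.eval (cos t) = 1 - cos (n * t) := by
  have step : ∀ m : ℤ,
      (sin t * (v m).1.eval (cos t) = sin (m * t) ∧
        (1 - cos t) * (v m).2.eval (cos t) = 1 - cos (m * t)) ↔
      (sin t * (v (m + 1)).1.eval (cos t) = sin ((m + 1 : ℤ) * t) ∧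
        (1 - cos t) * (v (m + 1)).2.eval (cos t) = 1 - cos ((m + 1 : ℤ) * t)) := by
    intro m
    rw [Int.cast_add, Int.cast_one, add_one_mul]
    exact sin_cos_recursion_step_iff (by simp [hrec]) (by simp [hrec])
  induction n using Int.induction_on with
  | zero => simp [h0]
  | succ m ih => exact (step m).1 ih
  | pred m ih => exact (step (-m - 1)).2 (by simpa using ih)

noncomputable def trigPair (t : ℝ) (n : ℤ) : ℝ × ℝ :=
  (sin (n * t) / sin t, (1 - cos (n * t)) / (1 - cos t))

lemma evalPair_cos_eq_trigPair (v : ℤ → ℝ[X] × ℝ[X]) (h0 : v 0 = (0, 0))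
    (hrec : ∀ n : ℤ, v (n + 1) =
      (X * (v n).1 + (X - 1) * (v n).2 + 1, (X + 1) * (v n).1 + X * (v n).2 + 1))
    {t : ℝ} (ht : sin t ≠ 0) (n : ℤ) :
    evalPair (v n) (cos t) = trigPair t n := by
  obtain ⟨h1, h2⟩ := sin_mul_eval_fst_and_one_sub_cos_mul_eval_snd v h0 hrec t n
  exact Prod.ext (eq_div_of_mul_eq ht (by rw [mul_comm]; exact h1))
    (eq_div_of_mul_eq (one_sub_cos_ne_zero ht) (by rw [mul_comm]; exact h2))

lemma wedge_trigPair_mul_one_sub_cos {t : ℝ} (ht : sin t ≠ 0) (j k : ℤ) :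
    wedge (trigPair t (j + 1) + trigPair t j - trigPair t 1 - trigPair t 0)
        (trigPair t (k + 1) - trigPair t k) * (1 - cos t) =
      2 * (cos ((k - j : ℤ) * t) - cos (k * t)) := by
  have hc := one_sub_cos_ne_zero ht
  simp only [wedge, trigPair, Prod.fst_add, Prod.snd_add, Prod.fst_sub, Prod.snd_sub]
  push_cast
  simp only [add_one_mul, sub_mul, one_mul, zero_mul, sin_zero, cos_zero, sin_add, cos_add,
    cos_sub]
  generalize (j : ℝ) * t = x
  generalize (k : ℝ) * t = y
  field_simp
  linear_combination ((cos x - 1) * sin y - sin x * cos y) * sin_sq_add_cos_sq t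

lemma integral_cos_int_mul (m : ℤ) :
    ∫ t in (0 : ℝ)..π, cos (m * t) = if m = 0 then π else 0 := by
  split_ifs with hm
  · simp [hm]
  · rw [intervalIntegral.integral_comp_mul_left cos (Int.cast_ne_zero.2 hm)]
    simp [sin_int_mul_pi]

theorem stmt10 (v : ℤ → Polynomial ℝ × Polynomial ℝ)
    (h0 : v 0 = (0, 0))
    (hrec : ∀ n : ℤ, v (n + 1) =
      (X * (v n).1 + (X - 1) * (v n).2 + 1, (X + 1) * (v n).1 + X * (v n).2 + 1)) :
    ∀ j k : ℤ,
      (1 / (2 * π)) *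
          ∫ t in (0 : ℝ)..π,
            wedge (evalPair (v (j + 1) + v j - v 1 - v 0) (Real.cos t))
                (evalPair (v (k + 1) - v k) (Real.cos t)) * (1 - Real.cos t) =
        (if j = k then (1 : ℝ) else 0) - (if k = 0 then (1 : ℝ) else 0) := by
  intro j k
  have hintegrand : Set.EqOn
      (fun t => wedge (evalPair (v (j + 1) + v j - v 1 - v 0) (cos t))
        (evalPair (v (k + 1) - v k) (cos t)) * (1 - cos t))
      (fun t => 2 * (cos ((k - j : ℤ) * t) - cos (k * t))) (Set.Ioo 0 π) := by
    intro t ht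
    have hsin : sin t ≠ 0 := (sin_pos_of_pos_of_lt_pi ht.1 ht.2).ne'
    simp only [evalPair_add, evalPair_sub, evalPair_cos_eq_trigPair v h0 hrec hsin]
    exact wedge_trigPair_mul_one_sub_cos hsin j k
  rw [intervalIntegral.integral_congr_Ioo_of_le pi_pos.le hintegrand,
    intervalIntegral.integral_const_mul, intervalIntegral.integral_sub
      ((by fun_prop : Continuous _).intervalIntegrable _ _)
      ((by fun_prop : Continuous _).intervalIntegrable _ _),
    integral_cos_int_mul, integral_cos_int_mul]
  simp only [sub_eq_zero, eq_comm (a := k)]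
  split_ifs <;> field_simp <;> simp
end
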